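/- arXiv:1608.02203 — 2 statements merged into one kernel-verified Lean document; each statement's English description precedes it below -/
import Mathlib

section
/- Let d_A, d_B, d_E be positive natural numbers and V an isometry from ℂ^{d_A} to ℂ^{d_B} ⊗ ℂ^{d_E}, with associated channel Φ(ρ) = Tr_E(V ρ Vᴴ). Then the output χ-quantity μ ↦ χ(Φ(μ)) = H(Φ(ρ̄(μ))) − ∫ H(Φ(ρ)) μ(dρ) is a continuous function on the space of Borel probability measures on the set S_{d_A} of states on ℂ^{d_A}, equipped with the topology of weak convergence, where ρ̄(μ) = ∫ ρ μ(dρ). -/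
open MeasureTheory ComplexOrder Matrix

noncomputable section

instance matMS {m n : Type*} : MeasurableSpace (Matrix m n ℂ) :=
  inferInstanceAs (MeasurableSpace (m → n → ℂ))

instance matBS {m n : Type*} [Countable m] [Countable n] : BorelSpace (Matrix m n ℂ) :=
  inferInstanceAs (BorelSpace (m → n → ℂ))

/-- The set of quantum states (density matrices). -/
def stateSet (n : ℕ) : Set (Matrix (Fin n) (Fin n) ℂ) :=
  {ρ | ρ.PosSemidef ∧ ρ.trace = 1}

/-- Von Neumann entropy: sum of `negMulLog` over eigenvalues. -/
def vnEntropy {ι : Type*} [Fintype ι] [DecidableEq ι] (ρ : Matrix ι ι ℂ) : ℝ :=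
  if h : ρ.IsHermitian then ∑ i, Real.negMulLog (h.eigenvalues i) else 0

/-- Partial trace over the second (environment) factor. -/
def ptraceE {dB dE : ℕ} (M : Matrix (Fin dB × Fin dE) (Fin dB × Fin dE) ℂ) :
    Matrix (Fin dB) (Fin dB) ℂ :=
  Matrix.of fun b b' => ∑ e, M (b, e) (b', e)

/-- Partial trace over the first factor. -/
def ptraceB {dB dE : ℕ} (M : Matrix (Fin dB × Fin dE) (Fin dB × Fin dE) ℂ) :
    Matrix (Fin dE) (Fin dE) ℂ :=
  Matrix.of fun e e' => ∑ b, M (b, e) (b, e')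

/-- Quantum mutual information I(B:E) of a bipartite state. -/
def qmi {dB dE : ℕ} (ω : Matrix (Fin dB × Fin dE) (Fin dB × Fin dE) ℂ) : ℝ :=
  vnEntropy (ptraceE ω) + vnEntropy (ptraceB ω) - vnEntropy ω

/-- The channel `ρ ↦ Tr_E (V ρ V†)` associated with a Stinespring isometry `V`. -/
def chanPhi {dA dB dE : ℕ} (V : Matrix (Fin dB × Fin dE) (Fin dA) ℂ)
    (ρ : Matrix (Fin dA) (Fin dA) ℂ) : Matrix (Fin dB) (Fin dB) ℂ :=
  ptraceE (V * ρ * Vᴴ)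

/-- The complementary channel `ρ ↦ Tr_B (V ρ V†)`. -/
def chanPhiHat {dA dB dE : ℕ} (V : Matrix (Fin dB × Fin dE) (Fin dA) ℂ)
    (ρ : Matrix (Fin dA) (Fin dA) ℂ) : Matrix (Fin dE) (Fin dE) ℂ :=
  ptraceB (V * ρ * Vᴴ)

/-- Barycenter (average state) of a generalized ensemble. -/
def barycenter {n : ℕ} (μ : ProbabilityMeasure (stateSet n)) :
    Matrix (Fin n) (Fin n) ℂ :=
  Matrix.of fun i j => ∫ ρ : stateSet n, ρ.1 i j ∂(μ : Measure (stateSet n))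

/-- Output χ-quantity of a generalized ensemble under a map `Φ`. -/
def gChiOut {n d : ℕ} (Φ : Matrix (Fin n) (Fin n) ℂ → Matrix (Fin d) (Fin d) ℂ)
    (μ : ProbabilityMeasure (stateSet n)) : ℝ :=
  vnEntropy (Φ (barycenter μ)) -
    ∫ ρ : stateSet n, vnEntropy (Φ ρ.1) ∂(μ : Measure (stateSet n))

/-- χ-quantity of a generalized ensemble. -/
def gChi {n : ℕ} (μ : ProbabilityMeasure (stateSet n)) : ℝ :=
  vnEntropy (barycenter μ) -
    ∫ ρ : stateSet n, vnEntropy ρ.1 ∂(μ : Measure (stateSet n))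

/-- Holevo χ-quantity of a finite ensemble. -/
def finChi {d m : ℕ} (π : Fin m → ℝ) (σ : Fin m → Matrix (Fin d) (Fin d) ℂ) : ℝ :=
  vnEntropy (∑ i, π i • σ i) - ∑ i, π i * vnEntropy (σ i)

/-- The set of pure states (rank-one projections) viewed inside the state space. -/
def pureStates (n : ℕ) : Set (stateSet n) := {ρ | ρ.1 * ρ.1 = ρ.1}

end

/-!
The entropy of a Hermitian matrix is the real part of the trace of `cfc negMulLog`, so by
continuity of the continuous functional calculus it is continuous on Hermitian matrices, and the
channel maps Hermitian matrices continuously to Hermitian matrices. The state space is closed and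
lies in the unit ball of the operator norm, hence is compact; thus `ρ ↦ H(Φ ρ)` and the matrix
entries are bounded continuous functions on it, whose integrals (in particular the entries of the
barycenter) depend continuously on `μ` for the weak topology.
-/

namespace Matrix.IsHermitian

variable {n 𝕜 : Type*} [Fintype n] [DecidableEq n] [RCLike 𝕜] {A : Matrix n n 𝕜}

lemma trace_cfc (hA : A.IsHermitian) (f : ℝ → ℝ) :
    (cfc f A).trace = ∑ i, (f (hA.eigenvalues i) : 𝕜) := by
  rw [hA.cfc_eq, IsHermitian.cfc, Unitary.conjStarAlgAut_apply, trace_mul_cycle,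
    Unitary.coe_star_mul_self, Matrix.one_mul, trace_diagonal]
  rfl

end Matrix.IsHermitian

section Entropy

variable {ι : Type*} [Fintype ι] [DecidableEq ι]

lemma vnEntropy_eq_re_trace_cfc {A : Matrix ι ι ℂ} (hA : A.IsHermitian) :
    vnEntropy A = ((cfc Real.negMulLog A).trace).re := by
  rw [vnEntropy, dif_pos hA, hA.trace_cfc]
  simp

-- The L2 operator norm makes matrices a C⋆-algebra; its topology is the product topology.
open scoped Matrix.Norms.L2Operator in
lemma continuousOn_vnEntropy :
    ContinuousOn (vnEntropy : Matrix ι ι ℂ → ℝ) {A | A.IsHermitian} := by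
  have hcfc : ContinuousOn (fun A : Matrix ι ι ℂ => cfc Real.negMulLog A) {A | A.IsHermitian} :=
    ContinuousOn.cfc_of_mem_nhdsSet (s := Set.univ) Real.negMulLog Filter.univ_mem
      continuousOn_id (fun A (hA : A.IsHermitian) => hA.isSelfAdjoint)
      Real.continuous_negMulLog.continuousOn
  refine ContinuousOn.congr ?_ fun A hA => vnEntropy_eq_re_trace_cfc hA
  exact Complex.continuous_re.comp_continuousOn (continuous_id.matrix_trace.comp_continuousOn hcfc)

end Entropy

section States

open scoped MatrixOrder

variable {ι : Type*} [Fintype ι] [DecidableEq ι] {n : ℕ}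

lemma isClosed_setOf_posSemidef : IsClosed {A : Matrix ι ι ℂ | A.PosSemidef} := by
  open scoped Matrix.Norms.L2Operator in
  simpa only [Matrix.nonneg_iff_posSemidef] using CStarAlgebra.isClosed_nonneg (A := Matrix ι ι ℂ)

lemma isClosed_stateSet (n : ℕ) : IsClosed (stateSet n) :=
  isClosed_setOf_posSemidef.inter (isClosed_eq continuous_id.matrix_trace continuous_const)

lemma Matrix.PosSemidef.eigenvalues_le_re_trace {A : Matrix ι ι ℂ} (hA : A.PosSemidef) (i : ι) :
    hA.1.eigenvalues i ≤ A.trace.re := by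
  rw [hA.1.trace_eq_sum_eigenvalues]
  simpa using Finset.single_le_sum (fun j _ => hA.eigenvalues_nonneg j) (Finset.mem_univ i)

open scoped Matrix.Norms.L2Operator in
lemma norm_le_one_of_mem_stateSet {ρ : Matrix (Fin n) (Fin n) ℂ} (hρ : ρ ∈ stateSet n) :
    ‖ρ‖ ≤ 1 := by
  have hρ₀ : 0 ≤ ρ := Matrix.nonneg_iff_posSemidef.2 hρ.1
  rw [CStarAlgebra.norm_le_iff_le_algebraMap ρ zero_le_one, le_algebraMap_iff_spectrum_le,
    hρ.1.1.spectrum_real_eq_range_eigenvalues]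
  rintro _ ⟨i, rfl⟩
  simpa [hρ.2] using hρ.1.eigenvalues_le_re_trace i

lemma isCompact_stateSet (n : ℕ) : IsCompact (stateSet n) := by
  open scoped Matrix.Norms.L2Operator in
  exact Metric.isCompact_of_isClosed_isBounded (isClosed_stateSet n)
    ((Metric.isBounded_closedBall (x := 0) (r := 1)).subset fun ρ hρ => by
      simpa using norm_le_one_of_mem_stateSet hρ)

instance compactSpace_stateSet (n : ℕ) : CompactSpace (stateSet n) :=
  isCompact_iff_compactSpace.mp (isCompact_stateSet n)

end States

section Channel

variable {dA dB dE : ℕ}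

lemma ptraceE_eq_sum_submatrix (M : Matrix (Fin dB × Fin dE) (Fin dB × Fin dE) ℂ) :
    ptraceE M = ∑ e, M.submatrix (·, e) (·, e) := by
  ext b b'
  simp [ptraceE, Matrix.sum_apply]

lemma ptraceE_isHermitian {M : Matrix (Fin dB × Fin dE) (Fin dB × Fin dE) ℂ}
    (hM : M.IsHermitian) : (ptraceE M).IsHermitian := by
  rw [ptraceE_eq_sum_submatrix]
  exact isSelfAdjoint_sum _ fun e _ => hM.submatrix _

lemma continuous_ptraceE :
    Continuous (ptraceE : Matrix (Fin dB × Fin dE) (Fin dB × Fin dE) ℂ → _) := by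
  simp_rw [funext ptraceE_eq_sum_submatrix]
  exact continuous_finsetSum _ fun e _ => continuous_id.matrix_submatrix _ _

lemma chanPhi_isHermitian (V : Matrix (Fin dB × Fin dE) (Fin dA) ℂ)
    {ρ : Matrix (Fin dA) (Fin dA) ℂ} (hρ : ρ.IsHermitian) : (chanPhi V ρ).IsHermitian :=
  ptraceE_isHermitian (Matrix.isHermitian_mul_mul_conjTranspose V hρ)

lemma continuous_chanPhi (V : Matrix (Fin dB × Fin dE) (Fin dA) ℂ) :
    Continuous (chanPhi V) :=
  continuous_ptraceE.comp ((continuous_const.matrix_mul continuous_id).matrix_mul continuous_const)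

end Channel

lemma MeasureTheory.ProbabilityMeasure.continuous_integral_of_compactSpace {X 𝕜 : Type*}
    [TopologicalSpace X] [CompactSpace X] [MeasurableSpace X] [OpensMeasurableSpace X]
    [RCLike 𝕜] {f : X → 𝕜} (hf : Continuous f) :
    Continuous fun μ : ProbabilityMeasure X => ∫ x, f x ∂μ :=
  continuous_iff_continuousAt.2 fun _ =>
    (tendsto_iff_forall_integral_rclike_tendsto 𝕜).1 Filter.tendsto_id
      (BoundedContinuousFunction.mkOfCompact ⟨f, hf⟩)

section Barycenter

variable {n : ℕ}

lemma continuous_barycenter :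
    Continuous (barycenter : ProbabilityMeasure (stateSet n) → _) :=
  continuous_matrix fun i j => ProbabilityMeasure.continuous_integral_of_compactSpace
    (continuous_subtype_val.matrix_elem i j)

lemma barycenter_isHermitian (μ : ProbabilityMeasure (stateSet n)) :
    (barycenter μ).IsHermitian := by
  ext i j
  simp only [barycenter, Matrix.conjTranspose_apply, Matrix.of_apply, Complex.star_def]
  rw [← integral_conj]
  exact integral_congr_ae (.of_forall fun ρ => ρ.2.1.1.apply i j)

end Barycenter

theorem continuous_output_chi_general
    (dA dB dE : ℕ)
    (V : Matrix (Fin dB × Fin dE) (Fin dA) ℂ) :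
    Continuous (fun μ : ProbabilityMeasure (stateSet dA) => gChiOut (chanPhi V) μ) := by
  have hHermitian : ContinuousOn (fun ρ => vnEntropy (chanPhi V ρ)) {ρ | ρ.IsHermitian} :=
    continuousOn_vnEntropy.comp (continuous_chanPhi V).continuousOn
      fun _ hρ => chanPhi_isHermitian V hρ
  have hStates : Continuous fun ρ : stateSet dA => vnEntropy (chanPhi V ρ) :=
    hHermitian.comp_continuous continuous_subtype_val fun ρ => ρ.2.1.1
  exact (hHermitian.comp_continuous continuous_barycenter barycenter_isHermitian).sub
    (ProbabilityMeasure.continuous_integral_of_compactSpace hStates)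

/-- For a channel with finite-dimensional input/output, the output χ-quantity
`μ ↦ χ(Φ(μ))` is continuous in the topology of weak convergence. -/
theorem continuous_output_chi
    (dA dB dE : ℕ) (hdA : 0 < dA) (hdB : 0 < dB) (hdE : 0 < dE)
    (V : Matrix (Fin dB × Fin dE) (Fin dA) ℂ) (hV : Vᴴ * V = 1) :
    Continuous (fun μ : ProbabilityMeasure (stateSet dA) => gChiOut (chanPhi V) μ) :=
  continuous_output_chi_general dA dB dE V
end

section
/- Let d_A, d_B, d_E be positive natural numbers and V an isometry from ℂ^{d_A} to ℂ^{d_B} ⊗ ℂ^{d_E}, with associated channel Φ(ρ) = Tr_E(V ρ Vᴴ). Then for every Borel probability measure μ₀ on the set S_{d_A} of states on ℂ^{d_A} there exists a Borel probability measure μ* on S_{d_A} supported by pure states (i.e. μ* assigns measure 1 to the set of rank-one projections) such that ρ̄(μ*) = ρ̄(μ₀) and χ(Φ(μ*)) ≥ χ(Φ(μ₀)), where ρ̄(μ) = ∫ ρ μ(dρ) and χ(Φ(μ)) = H(Φ(ρ̄(μ))) − ∫ H(Φ(ρ)) μ(dρ). -/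
open MeasureTheory ComplexOrder Matrix

/-!
Write a state as `ρ = S Sᴴ` with `S = √ρ`. The columns `sⱼ` of `S` give
`ρ = ∑ⱼ ‖sⱼ‖² Pⱼ` with pure states `Pⱼ = sⱼ sⱼᴴ / ‖sⱼ‖²`, and since `√·` is continuous for the
functional calculus, the weights and the `Pⱼ` depend measurably on `ρ`. Splitting every state of
the ensemble into its components `Pⱼ` with weights `‖sⱼ‖²` keeps the barycenter, and because the
channel is linear, `H(Φ ρ) ≥ ∑ⱼ ‖sⱼ‖² H(Φ Pⱼ)` by concavity of the von Neumann entropy. So the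
average output entropy can only drop, and the output χ can only grow. Concavity itself comes from
Peierls' inequality in the eigenbasis of the mixture.
-/

open scoped NNReal

namespace Matrix

section NormSq

variable {ι κ : Type*}

lemma sum_norm_sq_row_eq [Fintype κ] (M : Matrix ι κ ℂ) (j : ι) :
    ∑ k, ‖M j k‖ ^ 2 = ((M * Mᴴ) j j).re := by
  simp [mul_apply, ← Complex.normSq_eq_norm_sq, Complex.normSq_apply]

lemma sum_norm_sq_col_eq [Fintype ι] (M : Matrix ι κ ℂ) (k : κ) :
    ∑ j, ‖M j k‖ ^ 2 = ((Mᴴ * M) k k).re := by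
  simp [mul_apply, ← Complex.normSq_eq_norm_sq, Complex.normSq_apply, mul_comm]

variable [Fintype ι] [DecidableEq ι]

lemma sum_norm_sq_row_of_mem_unitaryGroup {U : Matrix ι ι ℂ} (hU : U ∈ unitaryGroup ι ℂ)
    (j : ι) : ∑ k, ‖U j k‖ ^ 2 = 1 := by
  rw [sum_norm_sq_row_eq, ← star_eq_conjTranspose, Unitary.mul_star_self_of_mem hU]
  simp

lemma sum_norm_sq_col_of_mem_unitaryGroup {U : Matrix ι ι ℂ} (hU : U ∈ unitaryGroup ι ℂ)
    (k : ι) : ∑ j, ‖U j k‖ ^ 2 = 1 := by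
  rw [sum_norm_sq_col_eq, ← star_eq_conjTranspose, Unitary.star_mul_self_of_mem hU]
  simp

lemma re_mul_diagonal_mul_star_apply_self (B : Matrix ι ι ℂ) (d : ι → ℝ) (j : ι) :
    ((B * diagonal (fun k => (d k : ℂ)) * star B) j j).re = ∑ k, ‖B j k‖ ^ 2 * d k := by
  rw [mul_apply, Complex.re_sum]
  refine Finset.sum_congr rfl fun k _ => ?_
  rw [mul_diagonal, star_apply, mul_right_comm, ← starRingEnd_apply, Complex.mul_conj,
    ← Complex.ofReal_mul, Complex.ofReal_re, Complex.normSq_eq_norm_sq]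

end NormSq

section Concavity

variable {ι : Type*} [Fintype ι] [DecidableEq ι]

namespace IsHermitian

variable {A : Matrix ι ι ℂ} (hA : A.IsHermitian)
include hA

/-- In any orthonormal basis, the diagonal of `A` is the image of its eigenvalues under a doubly
stochastic matrix. -/
lemma re_conj_apply_self (U : Matrix ι ι ℂ) (j : ι) :
    ((star U * A * U) j j).re =
      ∑ k, ‖(star U * hA.eigenvectorUnitary) j k‖ ^ 2 * hA.eigenvalues k := by
  rw [← re_mul_diagonal_mul_star_apply_self]
  congr 3
  conv_lhs => rw [hA.spectral_theorem, Unitary.conjStarAlgAut_apply]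
  simp only [star_mul, star_star, Function.comp_def, RCLike.ofReal]
  noncomm_ring

lemma eigenvalues_eq_re_conj_apply_self (j : ι) :
    hA.eigenvalues j =
      ((star (hA.eigenvectorUnitary : Matrix ι ι ℂ) * A * hA.eigenvectorUnitary) j j).re := by
  have h := congr_fun₂ hA.conjStarAlgAut_star_eigenvectorUnitary j j
  simp only [Unitary.conjStarAlgAut_apply, Unitary.coe_star, star_star] at h
  simp [h]

lemma re_conj_apply_self_mem {s : Set ℝ} (hs : Convex ℝ s) (hA_mem : ∀ k, hA.eigenvalues k ∈ s)
    {U : Matrix ι ι ℂ} (hU : U ∈ unitaryGroup ι ℂ) (j : ι) :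
    ((star U * A * U) j j).re ∈ s := by
  have hB : star U * (hA.eigenvectorUnitary : Matrix ι ι ℂ) ∈ unitaryGroup ι ℂ :=
    mul_mem (Unitary.star_mem hU) hA.eigenvectorUnitary.2
  rw [hA.re_conj_apply_self]
  exact hs.sum_mem (fun k _ => sq_nonneg _) (sum_norm_sq_row_of_mem_unitaryGroup hB j)
    (fun k _ => hA_mem k)

/-- Peierls' inequality. -/
lemma sum_map_eigenvalues_le_of_concaveOn {s : Set ℝ} {f : ℝ → ℝ} (hf : ConcaveOn ℝ s f)
    (hA_mem : ∀ k, hA.eigenvalues k ∈ s) {U : Matrix ι ι ℂ} (hU : U ∈ unitaryGroup ι ℂ) :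
    ∑ k, f (hA.eigenvalues k) ≤ ∑ j, f ((star U * A * U) j j).re := by
  set D : ι → ι → ℝ := fun j k => ‖(star U * hA.eigenvectorUnitary) j k‖ ^ 2
  have hB : star U * (hA.eigenvectorUnitary : Matrix ι ι ℂ) ∈ unitaryGroup ι ℂ :=
    mul_mem (Unitary.star_mem hU) hA.eigenvectorUnitary.2
  calc ∑ k, f (hA.eigenvalues k) = ∑ k, (∑ j, D j k) * f (hA.eigenvalues k) := by
        simp [D, sum_norm_sq_col_of_mem_unitaryGroup hB]
    _ = ∑ j, ∑ k, D j k • f (hA.eigenvalues k) := by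
        simp only [Finset.sum_mul, smul_eq_mul]
        exact Finset.sum_comm
    _ ≤ ∑ j, f (∑ k, D j k • hA.eigenvalues k) := Finset.sum_le_sum fun j _ =>
        hf.le_map_sum (fun k _ => sq_nonneg _) (sum_norm_sq_row_of_mem_unitaryGroup hB j)
          (fun k _ => hA_mem k)
    _ = ∑ j, f ((star U * A * U) j j).re := by
        simp only [hA.re_conj_apply_self, smul_eq_mul, D]

end IsHermitian

theorem sum_mul_sum_map_eigenvalues_le {κ : Type*} [Fintype κ] {s : Set ℝ} {f : ℝ → ℝ}
    (hf : ConcaveOn ℝ s f) {w : κ → ℝ} (hw₀ : ∀ i, 0 ≤ w i) (hw₁ : ∑ i, w i = 1)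
    {σ : κ → Matrix ι ι ℂ} (hσ : ∀ i, (σ i).IsHermitian)
    (hσ_mem : ∀ i k, (hσ i).eigenvalues k ∈ s) (hbar : (∑ i, w i • σ i).IsHermitian) :
    ∑ i, w i * ∑ k, f ((hσ i).eigenvalues k) ≤ ∑ k, f (hbar.eigenvalues k) := by
  set U : Matrix ι ι ℂ := (hbar.eigenvectorUnitary : Matrix ι ι ℂ)
  have hU : U ∈ unitaryGroup ι ℂ := hbar.eigenvectorUnitary.2
  set q : κ → ι → ℝ := fun i j => ((star U * σ i * U) j j).re
  have hbar_eq : ∀ j, hbar.eigenvalues j = ∑ i, w i • q i j := by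
    intro j
    simp [hbar.eigenvalues_eq_re_conj_apply_self, q, U, Finset.mul_sum, Finset.sum_mul,
      sum_apply, Complex.re_sum]
  calc ∑ i, w i * ∑ k, f ((hσ i).eigenvalues k)
      ≤ ∑ i, w i * ∑ j, f (q i j) := Finset.sum_le_sum fun i _ => mul_le_mul_of_nonneg_left
        ((hσ i).sum_map_eigenvalues_le_of_concaveOn hf (hσ_mem i) hU) (hw₀ i)
    _ = ∑ j, ∑ i, w i • f (q i j) := by
        simp only [Finset.mul_sum, smul_eq_mul]
        exact Finset.sum_comm
    _ ≤ ∑ k, f (hbar.eigenvalues k) := Finset.sum_le_sum fun j _ => by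
        rw [hbar_eq]
        exact hf.le_map_sum (fun i _ => hw₀ i) hw₁
          (fun i _ => (hσ i).re_conj_apply_self_mem hf.1 (hσ_mem i) hU j)

end Concavity

section FunctionalCalculus

variable {ι : Type*} [Fintype ι] [DecidableEq ι]

open scoped Matrix.Norms.L2Operator in
theorem measurable_cfc {f : ℝ → ℝ} (hf : Continuous f) :
    Measurable (cfc f : Matrix ι ι ℂ → Matrix ι ι ℂ) := by
  classical
  have hcont : ContinuousOn (cfc f : Matrix ι ι ℂ → Matrix ι ι ℂ) {A | IsSelfAdjoint A} :=
    ContinuousOn.cfc_of_mem_nhdsSet f (s := Set.univ) Filter.univ_mem continuousOn_id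
      (fun _ hA => hA) hf.continuousOn
  have hclosed : IsClosed {A : Matrix ι ι ℂ | IsSelfAdjoint A} :=
    isClosed_eq continuous_star continuous_id
  have hpiecewise : (cfc f : Matrix ι ι ℂ → Matrix ι ι ℂ) =
      Set.piecewise {A | IsSelfAdjoint A} (cfc f) 0 := by
    ext1 A
    by_cases hA : IsSelfAdjoint A
    · simp [hA]
    · simp [hA, cfc_apply_of_not_predicate A hA]
  rw [hpiecewise]
  exact hcont.measurable_piecewise continuousOn_const hclosed.measurableSet

lemma IsHermitian.trace_cfc_s8 {A : Matrix ι ι ℂ} (hA : A.IsHermitian) (f : ℝ → ℝ) :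
    (cfc f A).trace = ∑ i, (f (hA.eigenvalues i) : ℂ) := by
  rw [hA.cfc_eq, IsHermitian.cfc, Unitary.conjStarAlgAut_apply, trace_mul_cycle,
    Unitary.coe_star_mul_self, one_mul, trace_diagonal]
  rfl

lemma isHermitian_cfc (f : ℝ → ℝ) (A : Matrix ι ι ℂ) : (cfc f A).IsHermitian :=
  cfc_predicate f A

lemma PosSemidef.cfc_sqrt_mul_self {ρ : Matrix ι ι ℂ} (hρ : ρ.PosSemidef) :
    cfc Real.sqrt ρ * cfc Real.sqrt ρ = ρ := by
  rw [← cfc_mul ..]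
  conv_rhs => rw [← cfc_id' ℝ ρ hρ.1]
  open scoped MatrixOrder in
  exact cfc_congr fun x hx => Real.mul_self_sqrt (spectrum_nonneg_of_nonneg hρ.nonneg hx)

end FunctionalCalculus

section Entropy

variable {ι : Type*} [Fintype ι] [DecidableEq ι]

lemma vnEntropy_eq_re_trace_cfc (A : Matrix ι ι ℂ) :
    vnEntropy A = (cfc Real.negMulLog A).trace.re := by
  by_cases hA : A.IsHermitian
  · simp [vnEntropy, hA, hA.trace_cfc_s8, Complex.re_sum]
  · rw [vnEntropy, dif_neg hA,
      cfc_apply_of_not_predicate (R := ℝ) A (show ¬IsSelfAdjoint A from hA)]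
    simp

lemma measurable_vnEntropy : Measurable (vnEntropy : Matrix ι ι ℂ → ℝ) := by
  simp_rw [funext vnEntropy_eq_re_trace_cfc]
  exact (Complex.continuous_re.comp continuous_id.matrix_trace).measurable.comp
    (measurable_cfc Real.continuous_negMulLog)

theorem sum_mul_vnEntropy_le {κ : Type*} [Fintype κ] {w : κ → ℝ} (hw₀ : ∀ i, 0 ≤ w i)
    (hw₁ : ∑ i, w i = 1) {σ : κ → Matrix ι ι ℂ} (hσ : ∀ i, (σ i).PosSemidef) :
    ∑ i, w i * vnEntropy (σ i) ≤ vnEntropy (∑ i, w i • σ i) := by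
  have hbar : (∑ i, w i • σ i).PosSemidef :=
    posSemidef_sum _ fun i _ => (hσ i).smul (hw₀ i)
  simp only [vnEntropy, dif_pos (hσ _).1, dif_pos hbar.1]
  exact sum_mul_sum_map_eigenvalues_le Real.concaveOn_negMulLog hw₀ hw₁ (fun i => (hσ i).1)
    (fun i k => (hσ i).eigenvalues_nonneg k) hbar.1

lemma PosSemidef.eigenvalues_le_one {ρ : Matrix ι ι ℂ} (hρ : ρ.PosSemidef) (htr : ρ.trace = 1)
    (k : ι) : hρ.1.eigenvalues k ≤ 1 := by
  have hsum : ∑ i, hρ.1.eigenvalues i = 1 := by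
    simpa [← Complex.ofReal_sum] using hρ.1.trace_eq_sum_eigenvalues.symm.trans htr
  rw [← hsum]
  exact Finset.single_le_sum (fun i _ => hρ.eigenvalues_nonneg i) (Finset.mem_univ k)

lemma vnEntropy_nonneg {ρ : Matrix ι ι ℂ} (hρ : ρ.PosSemidef) (htr : ρ.trace = 1) :
    0 ≤ vnEntropy ρ := by
  rw [vnEntropy, dif_pos hρ.1]
  exact Finset.sum_nonneg fun k _ =>
    Real.negMulLog_nonneg (hρ.eigenvalues_nonneg k) (hρ.eigenvalues_le_one htr k)

lemma vnEntropy_le_card {ρ : Matrix ι ι ℂ} (hρ : ρ.PosSemidef) :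
    vnEntropy ρ ≤ Fintype.card ι := by
  rw [vnEntropy, dif_pos hρ.1]
  calc ∑ k, Real.negMulLog (hρ.1.eigenvalues k) ≤ ∑ _k : ι, (1 : ℝ) :=
        Finset.sum_le_sum fun k _ => (Real.negMulLog_le_one_sub_self
          (hρ.eigenvalues_nonneg k)).trans (by linarith [hρ.eigenvalues_nonneg k])
    _ = Fintype.card ι := by simp

lemma PosSemidef.norm_apply_le {ρ : Matrix ι ι ℂ} (hρ : ρ.PosSemidef) (i k : ι) :
    ‖ρ i k‖ ≤ ((ρ i i).re + (ρ k k).re) / 2 := by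
  set S := cfc Real.sqrt ρ
  have hρS : S * Sᴴ = ρ := by rw [(isHermitian_cfc Real.sqrt ρ).eq, hρ.cfc_sqrt_mul_self]
  calc ‖ρ i k‖ = ‖∑ j, S i j * star (S k j)‖ := by simp [← hρS, mul_apply]
    _ ≤ ∑ j, ‖S i j‖ * ‖S k j‖ := (norm_sum_le _ _).trans (by simp)
    _ ≤ ∑ j, (‖S i j‖ ^ 2 + ‖S k j‖ ^ 2) / 2 := Finset.sum_le_sum fun j _ => by
        nlinarith [sq_nonneg (‖S i j‖ - ‖S k j‖)]
    _ = ((ρ i i).re + (ρ k k).re) / 2 := by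
        rw [← Finset.sum_div, Finset.sum_add_distrib, sum_norm_sq_row_eq, sum_norm_sq_row_eq, hρS]

lemma PosSemidef.norm_apply_le_one {ρ : Matrix ι ι ℂ} (hρ : ρ.PosSemidef) (htr : ρ.trace = 1)
    (i k : ι) : ‖ρ i k‖ ≤ 1 := by
  have hdiag : ∀ j, (ρ j j).re ≤ 1 := fun j => by
    have h : ∑ l, (ρ l l).re = 1 := by simpa [trace, Complex.re_sum] using congr_arg Complex.re htr
    rw [← h]
    exact Finset.single_le_sum (f := fun j => (ρ j j).re)
      (fun l _ => (Complex.nonneg_iff.1 hρ.diag_nonneg).1) (Finset.mem_univ j)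
  linarith [hρ.norm_apply_le i k, hdiag i, hdiag k]

end Entropy

section Columns

variable {ι : Type*} [Fintype ι]

noncomputable def columnWeight (B : Matrix ι ι ℂ) (j : ι) : ℝ≥0 := ∑ i, ‖B i j‖₊ ^ 2

lemma coe_columnWeight (B : Matrix ι ι ℂ) (j : ι) :
    (columnWeight B j : ℝ) = ∑ i, ‖B i j‖ ^ 2 := by
  simp [columnWeight]

lemma continuous_columnWeight (j : ι) : Continuous fun B : Matrix ι ι ℂ => columnWeight B j := by
  unfold columnWeight
  fun_prop

lemma star_col_dotProduct_col (B : Matrix ι ι ℂ) (j : ι) :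
    star (fun i => B i j) ⬝ᵥ (fun i => B i j) = ((columnWeight B j : ℝ) : ℂ) := by
  simp [dotProduct, coe_columnWeight, Complex.conj_mul']

lemma sum_columnWeight (B : Matrix ι ι ℂ) :
    ∑ j, (columnWeight B j : ℝ) = (Bᴴ * B).trace.re := by
  simp [coe_columnWeight, sum_norm_sq_col_eq, trace, Complex.re_sum]

lemma sum_vecMulVec_col (B : Matrix ι ι ℂ) :
    ∑ j, vecMulVec (fun i => B i j) (star fun i => B i j) = B * Bᴴ := by
  ext i k
  simp [sum_apply, vecMulVec_apply, mul_apply]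

variable [DecidableEq ι]

noncomputable def unitColumn (B : Matrix ι ι ℂ) (j : ι) : ι → ℂ :=
  if columnWeight B j = 0 then Pi.single j 1
  else (Real.sqrt (columnWeight B j))⁻¹ • fun i => B i j

lemma star_unitColumn_dotProduct (B : Matrix ι ι ℂ) (j : ι) :
    star (unitColumn B j) ⬝ᵥ unitColumn B j = 1 := by
  unfold unitColumn
  split_ifs with h
  · simp
  · rw [star_smul, star_trivial, smul_dotProduct, dotProduct_smul, star_col_dotProduct_col,
      smul_smul, Complex.real_smul, ← Complex.ofReal_mul, ← mul_inv,
      Real.mul_self_sqrt (NNReal.coe_nonneg _), inv_mul_cancel₀ (by exact_mod_cast h),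
      Complex.ofReal_one]

lemma columnWeight_smul_vecMulVec_unitColumn (B : Matrix ι ι ℂ) (j : ι) :
    (columnWeight B j : ℝ) • vecMulVec (unitColumn B j) (star (unitColumn B j)) =
      vecMulVec (fun i => B i j) (star fun i => B i j) := by
  unfold unitColumn
  split_ifs with h
  · have hcol : (fun i => B i j) = 0 := by
      simpa [h] using star_col_dotProduct_col B j
    simp [h, hcol]
  · have hw : (0 : ℝ) < columnWeight B j := by positivity
    have hs : Real.sqrt (columnWeight B j) ≠ 0 := (Real.sqrt_pos.2 hw).ne'
    have hsq : ((Real.sqrt (columnWeight B j) : ℝ) : ℂ) ^ 2 = (columnWeight B j : ℝ) := by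
      rw [← Complex.ofReal_pow, Real.sq_sqrt hw.le]
    ext i k
    simp only [smul_apply, vecMulVec_apply, Pi.smul_apply, Pi.star_apply, star_smul,
      star_trivial, Complex.real_smul, Complex.ofReal_inv]
    rw [← hsq]
    field_simp

lemma measurable_unitColumn (j : ι) : Measurable fun B : Matrix ι ι ℂ => unitColumn B j := by
  have hw := (continuous_columnWeight (ι := ι) j).measurable
  refine Measurable.ite (hw (measurableSet_singleton 0)) measurable_const ?_
  exact ((NNReal.continuous_coe.measurable.comp hw).sqrt.inv).smul
    (measurable_pi_lambda _ fun i => (measurable_pi_apply j).comp (measurable_pi_apply i))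

end Columns

end Matrix

namespace MeasureTheory

variable {X Y : Type*} [MeasurableSpace X] [MeasurableSpace Y] {κ : Type*} [Fintype κ]
  {μ : Measure X} {f : κ → X → Y} {w : κ → X → ℝ≥0}

lemma isProbabilityMeasure_sum_map_withDensity [IsProbabilityMeasure μ]
    (hf : ∀ i, Measurable (f i)) (hw : ∀ i, Measurable (w i)) (hw_sum : ∀ x, ∑ i, w i x = 1) :
    IsProbabilityMeasure (∑ i, (μ.withDensity fun x => w i x).map (f i)) := by
  constructor
  simp only [Measure.coe_finsetSum, Finset.sum_apply, Measure.map_apply (hf _) MeasurableSet.univ,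
    Set.preimage_univ, withDensity_apply _ MeasurableSet.univ, Measure.restrict_univ]
  rw [← lintegral_finsetSum _ fun i _ => (hw i).coe_nnreal_ennreal]
  simp [← ENNReal.ofNNReal_finsetSum, hw_sum]

lemma sum_map_withDensity_compl_eq_zero (hf : ∀ i, Measurable (f i)) {s : Set Y}
    (hs : MeasurableSet s) (h : ∀ i x, f i x ∈ s) :
    (∑ i, (μ.withDensity fun x => w i x).map (f i)) sᶜ = 0 := by
  have hpre : ∀ i, f i ⁻¹' sᶜ = ∅ := fun i =>
    Set.eq_empty_of_forall_notMem fun x hx => hx (h i x)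
  simp [Measure.map_apply (hf _) hs.compl, hpre]

lemma integral_sum_map_withDensity {E : Type*} [NormedAddCommGroup E] [NormedSpace ℝ E]
    (hf : ∀ i, Measurable (f i)) (hw : ∀ i, Measurable (w i)) {g : Y → E}
    (hg : Integrable g (∑ i, (μ.withDensity fun x => w i x).map (f i))) :
    ∫ y, g y ∂(∑ i, (μ.withDensity fun x => w i x).map (f i)) =
      ∫ x, ∑ i, (w i x : ℝ) • g (f i x) ∂μ := by
  have hg_i : ∀ i, Integrable g ((μ.withDensity fun x => w i x).map (f i)) := fun i =>
    hg.mono_measure (Finset.single_le_sum (fun _ _ => Measure.zero_le _) (Finset.mem_univ i))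
  have hgf_i : ∀ i, Integrable (fun x => (w i x : ℝ) • g (f i x)) μ := fun i => by
    have := (integrable_map_measure (hg_i i).1 (hf i).aemeasurable).1 (hg_i i)
    simpa [NNReal.smul_def] using (integrable_withDensity_iff_integrable_smul (hw i)).1 this
  rw [integral_finsetSum_measure fun i _ => hg_i i, integral_finsetSum _ fun i _ => hgf_i i]
  refine Finset.sum_congr rfl fun i _ => ?_
  rw [integral_map (hf i).aemeasurable (hg_i i).1, integral_withDensity_eq_integral_smul (hw i)]
  simp [NNReal.smul_def]

end MeasureTheory

section PureDecomposition

variable {n : ℕ}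

lemma vecMulVec_star_self_mem_stateSet {u : Fin n → ℂ} (hu : star u ⬝ᵥ u = 1) :
    vecMulVec u (star u) ∈ stateSet n :=
  ⟨posSemidef_vecMulVec_self_star u, by
    simpa [trace, vecMulVec_apply, dotProduct, mul_comm] using hu⟩

noncomputable def pureComponent (j : Fin n) (ρ : stateSet n) : stateSet n :=
  ⟨vecMulVec (unitColumn (cfc Real.sqrt ρ.1) j) (star (unitColumn (cfc Real.sqrt ρ.1) j)),
    vecMulVec_star_self_mem_stateSet (star_unitColumn_dotProduct _ j)⟩

noncomputable def pureWeight (j : Fin n) (ρ : stateSet n) : ℝ≥0 :=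
  columnWeight (cfc Real.sqrt ρ.1) j

lemma pureComponent_mem_pureStates (j : Fin n) (ρ : stateSet n) :
    pureComponent j ρ ∈ pureStates n := by
  simp only [pureStates, Set.mem_ofPred_eq, pureComponent]
  rw [vecMulVec_mul_vecMulVec, star_unitColumn_dotProduct, one_smul]

lemma sum_pureWeight (ρ : stateSet n) : ∑ j, pureWeight j ρ = 1 := by
  rw [← NNReal.coe_inj, NNReal.coe_sum]
  simp only [pureWeight, sum_columnWeight, (isHermitian_cfc Real.sqrt ρ.1).eq,
    ρ.2.1.cfc_sqrt_mul_self, ρ.2.2, Complex.one_re, NNReal.coe_one]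

lemma sum_pureWeight_smul_pureComponent (ρ : stateSet n) :
    ∑ j, (pureWeight j ρ : ℝ) • (pureComponent j ρ).1 = ρ.1 := by
  simp only [pureWeight, pureComponent, columnWeight_smul_vecMulVec_unitColumn, sum_vecMulVec_col,
    (isHermitian_cfc Real.sqrt ρ.1).eq, ρ.2.1.cfc_sqrt_mul_self]

lemma measurable_pureWeight (j : Fin n) : Measurable (pureWeight (n := n) j) :=
  (continuous_columnWeight j).measurable.comp
    ((measurable_cfc Real.continuous_sqrt).comp measurable_subtype_coe)

lemma measurable_pureComponent (j : Fin n) : Measurable (pureComponent (n := n) j) := by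
  have hu := (measurable_unitColumn j).comp
    ((measurable_cfc Real.continuous_sqrt).comp (measurable_subtype_coe (p := (· ∈ stateSet n))))
  exact ((continuous_id.matrix_vecMulVec continuous_star).measurable.comp hu).subtype_mk

lemma sum_pureWeight_mul_vnEntropy_le {m : ℕ}
    (Φ : Matrix (Fin n) (Fin n) ℂ →ₗ[ℝ] Matrix (Fin m) (Fin m) ℂ)
    (hΦ : Set.MapsTo Φ (stateSet n) (stateSet m)) (ρ : stateSet n) :
    ∑ j, (pureWeight j ρ : ℝ) * vnEntropy (Φ (pureComponent j ρ).1) ≤ vnEntropy (Φ ρ.1) := by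
  have hmix : Φ ρ.1 = ∑ j, (pureWeight j ρ : ℝ) • Φ (pureComponent j ρ).1 := by
    rw [← sum_pureWeight_smul_pureComponent ρ]
    simp [map_sum, map_smul]
  rw [hmix]
  exact sum_mul_vnEntropy_le (fun j => (pureWeight j ρ).coe_nonneg)
    (by rw [← NNReal.coe_sum, sum_pureWeight, NNReal.coe_one])
    fun j => (hΦ (pureComponent j ρ).2).1

end PureDecomposition

section PureEnsemble

variable {n : ℕ}

noncomputable def pureEnsemble (μ : ProbabilityMeasure (stateSet n)) :
    ProbabilityMeasure (stateSet n) :=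
  ⟨∑ j, ((μ : Measure (stateSet n)).withDensity fun ρ => pureWeight j ρ).map (pureComponent j),
    isProbabilityMeasure_sum_map_withDensity measurable_pureComponent measurable_pureWeight
      sum_pureWeight⟩

variable (μ : ProbabilityMeasure (stateSet n))

lemma measurableSet_pureStates : MeasurableSet (pureStates n) :=
  (isClosed_eq (continuous_subtype_val.matrix_mul continuous_subtype_val)
    continuous_subtype_val).measurableSet

lemma pureEnsemble_pureStates : (pureEnsemble μ : Measure (stateSet n)) (pureStates n) = 1 :=
  prob_compl_eq_zero_iff measurableSet_pureStates |>.1 <|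
    sum_map_withDensity_compl_eq_zero measurable_pureComponent measurableSet_pureStates
      pureComponent_mem_pureStates

lemma integral_pureEnsemble {E : Type*} [NormedAddCommGroup E] [NormedSpace ℝ E]
    {g : stateSet n → E} (hg : StronglyMeasurable g) {C : ℝ} (hC : ∀ ρ, ‖g ρ‖ ≤ C) :
    ∫ ρ, g ρ ∂(pureEnsemble μ : Measure (stateSet n)) =
      ∫ ρ, ∑ j, (pureWeight j ρ : ℝ) • g (pureComponent j ρ) ∂(μ : Measure (stateSet n)) := by
  have hint : Integrable g (pureEnsemble μ : Measure (stateSet n)) :=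
    .of_bound hg.aestronglyMeasurable C (ae_of_all _ hC)
  exact integral_sum_map_withDensity measurable_pureComponent measurable_pureWeight hint

lemma barycenter_pureEnsemble : barycenter (pureEnsemble μ) = barycenter μ := by
  ext i k
  have hg : Continuous fun ρ : stateSet n => ρ.1 i k :=
    (continuous_apply_apply i k).comp continuous_subtype_val
  simp only [barycenter, of_apply]
  rw [integral_pureEnsemble μ hg.stronglyMeasurable fun ρ => ρ.2.1.norm_apply_le_one ρ.2.2 i k]
  refine integral_congr_ae (ae_of_all _ fun ρ => ?_)
  simpa [Matrix.sum_apply] using congr_fun₂ (sum_pureWeight_smul_pureComponent ρ) i k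

lemma integral_vnEntropy_pureEnsemble_le {m : ℕ}
    (Φ : Matrix (Fin n) (Fin n) ℂ →ₗ[ℝ] Matrix (Fin m) (Fin m) ℂ)
    (hΦ : Set.MapsTo Φ (stateSet n) (stateSet m)) :
    ∫ ρ, vnEntropy (Φ ρ.1) ∂(pureEnsemble μ : Measure (stateSet n)) ≤
      ∫ ρ, vnEntropy (Φ ρ.1) ∂(μ : Measure (stateSet n)) := by
  have hg : Measurable fun ρ : stateSet n => vnEntropy (Φ ρ.1) :=
    measurable_vnEntropy.comp (Φ.continuous_of_finiteDimensional.measurable.comp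
      measurable_subtype_coe)
  have hC : ∀ ρ : stateSet n, ‖vnEntropy (Φ ρ.1)‖ ≤ m := fun ρ => by
    rw [Real.norm_of_nonneg (vnEntropy_nonneg (hΦ ρ.2).1 (hΦ ρ.2).2)]
    simpa using vnEntropy_le_card (hΦ ρ.2).1
  rw [integral_pureEnsemble μ hg.stronglyMeasurable hC]
  refine integral_mono_of_nonneg (ae_of_all _ fun ρ => ?_)
    (.of_bound hg.aestronglyMeasurable m (ae_of_all _ hC))
    (ae_of_all _ fun ρ => sum_pureWeight_mul_vnEntropy_le Φ hΦ ρ)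
  exact Finset.sum_nonneg fun j _ => mul_nonneg (pureWeight j ρ).coe_nonneg
    (vnEntropy_nonneg (hΦ (pureComponent j ρ).2).1 (hΦ (pureComponent j ρ).2).2)

end PureEnsemble

section Channel

variable {dA dB dE : ℕ}

lemma ptraceE_eq_sum_conjTranspose_mul_mul (M : Matrix (Fin dB × Fin dE) (Fin dB × Fin dE) ℂ) :
    ptraceE M = ∑ e : Fin dE,
      (of fun (p : Fin dB × Fin dE) (b : Fin dB) => if p = (b, e) then (1 : ℂ) else 0)ᴴ * M *
        of fun (p : Fin dB × Fin dE) (b : Fin dB) => if p = (b, e) then (1 : ℂ) else 0 := by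
  ext b b'
  simp [ptraceE, Matrix.sum_apply, mul_apply, conjTranspose_apply]

lemma posSemidef_ptraceE {M : Matrix (Fin dB × Fin dE) (Fin dB × Fin dE) ℂ} (hM : M.PosSemidef) :
    (ptraceE M).PosSemidef := by
  rw [ptraceE_eq_sum_conjTranspose_mul_mul]
  exact posSemidef_sum _ fun e _ => hM.conjTranspose_mul_mul_same _

lemma trace_ptraceE (M : Matrix (Fin dB × Fin dE) (Fin dB × Fin dE) ℂ) :
    (ptraceE M).trace = M.trace := by
  simp [trace, ptraceE, Fintype.sum_prod_type]

lemma chanPhi_mem_stateSet {V : Matrix (Fin dB × Fin dE) (Fin dA) ℂ} (hV : Vᴴ * V = 1) :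
    Set.MapsTo (chanPhi V) (stateSet dA) (stateSet dB) := fun ρ hρ =>
  ⟨posSemidef_ptraceE (hρ.1.mul_mul_conjTranspose_same V), by
    rw [chanPhi, trace_ptraceE, trace_mul_cycle, hV, one_mul, hρ.2]⟩

noncomputable def chanPhiLinearMap (V : Matrix (Fin dB × Fin dE) (Fin dA) ℂ) :
    Matrix (Fin dA) (Fin dA) ℂ →ₗ[ℝ] Matrix (Fin dB) (Fin dB) ℂ where
  toFun := chanPhi V
  map_add' ρ σ := by
    ext
    simp [chanPhi, ptraceE, Matrix.mul_add, Matrix.add_mul, Finset.sum_add_distrib]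
  map_smul' c ρ := by
    ext
    simp [chanPhi, ptraceE, Finset.mul_sum]

end Channel

theorem gChiOut_le_gChiOut_pureEnsemble {n m : ℕ}
    (Φ : Matrix (Fin n) (Fin n) ℂ →ₗ[ℝ] Matrix (Fin m) (Fin m) ℂ)
    (hΦ : Set.MapsTo Φ (stateSet n) (stateSet m)) (μ : ProbabilityMeasure (stateSet n)) :
    gChiOut Φ μ ≤ gChiOut Φ (pureEnsemble μ) := by
  rw [gChiOut, gChiOut, barycenter_pureEnsemble]
  exact sub_le_sub_left (integral_vnEntropy_pureEnsemble_le μ Φ hΦ) _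

theorem exists_pure_ensemble_ge_output_chi_general
    (dA dB dE : ℕ)
    (V : Matrix (Fin dB × Fin dE) (Fin dA) ℂ) (hV : Vᴴ * V = 1)
    (μ₀ : ProbabilityMeasure (stateSet dA)) :
    ∃ μs : ProbabilityMeasure (stateSet dA),
      (μs : Measure (stateSet dA)) (pureStates dA) = 1 ∧
      barycenter μs = barycenter μ₀ ∧
      gChiOut (chanPhi V) μ₀ ≤ gChiOut (chanPhi V) μs :=
  ⟨pureEnsemble μ₀, pureEnsemble_pureStates μ₀, barycenter_pureEnsemble μ₀,
    gChiOut_le_gChiOut_pureEnsemble (chanPhiLinearMap V) (chanPhi_mem_stateSet hV) μ₀⟩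

/-- For any generalized ensemble `μ₀` there is an ensemble `μ*` supported by pure states
with the same barycenter and at least as large output χ-quantity. -/
theorem exists_pure_ensemble_ge_output_chi
    (dA dB dE : ℕ) (hdA : 0 < dA) (hdB : 0 < dB) (hdE : 0 < dE)
    (V : Matrix (Fin dB × Fin dE) (Fin dA) ℂ) (hV : Vᴴ * V = 1)
    (μ₀ : ProbabilityMeasure (stateSet dA)) :
    ∃ μs : ProbabilityMeasure (stateSet dA),
      (μs : Measure (stateSet dA)) (pureStates dA) = 1 ∧
      barycenter μs = barycenter μ₀ ∧
      gChiOut (chanPhi V) μ₀ ≤ gChiOut (chanPhi V) μs :=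
  exists_pure_ensemble_ge_output_chi_general dA dB dE V hV μ₀
end
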